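/- Work in the good-parity setting, half-integer case. Let y₀ ∈ ℕ + 1/2, and let (𝔪, ε) be the signed symmetric multisegment with 𝔪 = Σ_{y=1/2}^{y₀} [−y,y] (y running over half-integers 1/2, 3/2, …, y₀), with ε([−1/2,1/2]) = −1 and ε([−y,y])·ε([−y+1,y−1]) = −1 for all 1/2 < y ≤ y₀. Then AD(𝔪, ε) = (𝔪, ε). -/

import Mathlib

namespace AZ

/-- A segment in doubled coordinates: the pair `(a, b)` represents the segment
`[a/2, b/2]` whose endpoints lie in `(1/2)ℤ`.  Thus the end `e(Δ)` is `Δ.2 / 2`,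
the beginning `b(Δ)` is `Δ.1 / 2`, `Δ` is centered iff `Δ.1 + Δ.2 = 0`, and
`c(Δ) = 1/2` iff `Δ.1 + Δ.2 = 2`. -/
abbrev Seg := ℤ × ℤ

namespace Seg

/-- Well-formedness of a segment: `a ≤ b` and `a ≡ b [ZMOD 2]`, i.e. `b - a ∈ 2ℕ`. -/
def WF (Δ : Seg) : Prop := Δ.1 ≤ Δ.2 ∧ Δ.1 % 2 = Δ.2 % 2

/-- The dual (contragredient) segment `Δ∨ = [−b, −a]`. -/
def dual (Δ : Seg) : Seg := (-Δ.2, -Δ.1)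

/-- `Δ⁻` : the segment with its end removed. -/
def trimEnd (Δ : Seg) : Seg := (Δ.1, Δ.2 - 2)

/-- `⁻Δ` : the segment with its beginning removed. -/
def trimBeg (Δ : Seg) : Seg := (Δ.1 + 2, Δ.2)

/-- `⁺Δ` : the segment with its beginning extended. -/
def extBeg (Δ : Seg) : Seg := (Δ.1 - 2, Δ.2)

/-- The order on segments: `[x₁,y₁] ≤ [x₂,y₂]` iff `x₁ < x₂`, or `x₁ = x₂` and `y₁ ≥ y₂`. -/
def le (Δ₁ Δ₂ : Seg) : Prop := Δ₁.1 < Δ₂.1 ∨ (Δ₁.1 = Δ₂.1 ∧ Δ₂.2 ≤ Δ₁.2)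

end Seg

/-- Labels `≤0`, `=0`, `≥0` for labeled segments. -/
inductive Label
  | le0 | eq0 | ge0
deriving DecidableEq

/-- Numerical index of a label, used to order the labels `≤0 < =0 < ≥0`. -/
def Label.idx : Label → ℕ
  | .le0 => 0
  | .eq0 => 1
  | .ge0 => 2

/-- A labeled segment: a segment together with a label. -/
abbrev LSeg := Seg × Label

namespace LSeg

/-- The order `⪯` on labeled segments: segments labeled `≤0` precede those labeled `=0`,
which precede those labeled `≥0`; for equal labels `≥0` or `≤0` one compares the segments,
and for label `=0` one compares the ends. -/
def le (Λ₁ Λ₂ : LSeg) : Prop :=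
  Λ₁.2.idx < Λ₂.2.idx ∨
    (Λ₁.2 = Λ₂.2 ∧
      if Λ₁.2 = Label.eq0 then Λ₁.1.2 ≤ Λ₂.1.2 else Seg.le Λ₁.1 Λ₂.1)

/-- The strict order `≺` on labeled segments. -/
def lt (Λ₁ Λ₂ : LSeg) : Prop := LSeg.le Λ₁ Λ₂ ∧ Λ₁ ≠ Λ₂

/-- The contragredient of a labeled segment: for a centered segment the label `≤0`
becomes `≥0` and the labels `=0`, `≥0` are kept; for a non-centered segment the
label is flipped. -/
def dual (Λ : LSeg) : LSeg :=
  (Seg.dual Λ.1,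
    if Λ.1.1 + Λ.1.2 = 0 then (if Λ.2 = Label.le0 then Label.ge0 else Λ.2)
    else
      match Λ.2 with
      | Label.le0 => Label.ge0
      | Label.eq0 => Label.eq0
      | Label.ge0 => Label.le0)

end LSeg

/-- The forced label of a non-centered segment. -/
def forcedLabel (Δ : Seg) : Label := if 0 < Δ.1 + Δ.2 then Label.ge0 else Label.le0

/-- The labeling `s(𝔪)` of a multisegment: each non-centered segment gets its forced
label; a centered segment of multiplicity `m` contributes `⌊m/2⌋` copies labeled `≤0`,
`⌊m/2⌋` copies labeled `≥0`, and `m − 2⌊m/2⌋` copies labeled `=0`. -/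
def smap (m : Multiset Seg) : Multiset LSeg :=
  (m.filter fun Δ => ¬ Δ.1 + Δ.2 = 0).map (fun Δ => (Δ, forcedLabel Δ)) +
    (m.toFinset.filter fun Δ => Δ.1 + Δ.2 = 0).val.bind (fun Δ =>
      Multiset.replicate (m.count Δ / 2) (Δ, Label.le0) +
        Multiset.replicate (m.count Δ / 2) (Δ, Label.ge0) +
        Multiset.replicate (m.count Δ % 2) (Δ, Label.eq0))

/-- A labeled segment is special (the initial sequence stops there): `[0,0]` labeled
`≥0` or `=0` in the integer case; `[1/2,1/2]`, or `[−1/2,1/2]` labeled `≥0` or `=0`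
with `ε([−1/2,1/2]) = −1`, in the half-integer case. -/
def Special (ε : Seg → ℤ) (Λ : LSeg) : Prop :=
  (Λ.1 = ((0 : ℤ), (0 : ℤ)) ∧ (Λ.2 = Label.ge0 ∨ Λ.2 = Label.eq0)) ∨
    Λ.1 = ((1 : ℤ), (1 : ℤ)) ∨
      (Λ.1 = ((-1 : ℤ), (1 : ℤ)) ∧ (Λ.2 = Label.ge0 ∨ Λ.2 = Label.eq0) ∧ ε (-1, 1) = -1)

instance (ε : Seg → ℤ) (Λ : LSeg) : Decidable (Special ε Λ) := by
  unfold Special; infer_instance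

/-- The condition for `next` to be a successor of `cur` in the initial sequence:
`next ≺ cur`, `e(next) = e(cur) − 1`, and opposite signs when both are centered. -/
def Succ (ε : Seg → ℤ) (cur next : LSeg) : Prop :=
  LSeg.lt next cur ∧ next.1.2 = cur.1.2 - 2 ∧
    (cur.1.1 + cur.1.2 = 0 → next.1.1 + next.1.2 = 0 → ε next.1 = - ε cur.1)

/-- `Δ 1, …, Δ l` is the initial sequence in the algorithm for `(m, ε)`:
`Δ 1` is the `⪯`-largest element of `s(m)` with maximal end; recursively,
`Δ (j+1)` is the `⪯`-largest successor of `Δ j`; the sequence stops when the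
current segment is special or no successor exists. -/
structure IsInitSeq (m : Multiset Seg) (ε : Seg → ℤ) (Δ : ℕ → LSeg) (l : ℕ) : Prop where
  one_le : 1 ≤ l
  mem : ∀ j, 1 ≤ j → j ≤ l → Δ j ∈ smap m
  first_max_end : ∀ Λ ∈ smap m, Λ.1.2 ≤ (Δ 1).1.2
  first_max : ∀ Λ ∈ smap m, Λ.1.2 = (Δ 1).1.2 → LSeg.le Λ (Δ 1)
  not_special : ∀ j, 1 ≤ j → j < l → ¬ Special ε (Δ j)
  succ : ∀ j, 1 ≤ j → j < l → Succ ε (Δ j) (Δ (j + 1))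
  succ_max : ∀ j, 1 ≤ j → j < l → ∀ Λ ∈ smap m, Succ ε (Δ j) Λ → LSeg.le Λ (Δ (j + 1))
  last : Special ε (Δ l) ∨ ∀ Λ ∈ smap m, ¬ Succ ε (Δ l) Λ

/-- The sign `ε₀`: `−1` if the sequence stopped at a special segment, `1` otherwise. -/
def eps0 (ε : Seg → ℤ) (Δ : ℕ → LSeg) (l : ℕ) : ℤ :=
  if Special ε (Δ l) then -1 else 1

/-- The number `n₀` of centered segments of `m`. -/
def nCentered (m : Multiset Seg) : ℕ := (m.filter fun Δ => Δ.1 + Δ.2 = 0).card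

/-- The sign `ε₁` of the centered segment `𝔪₁` in the case `ε₀ = −1`:
`(−1)^(n₀+1)·ε([0,0])` in the integer case, `(−1)^(n₀)` in the half-integer case. -/
def epsOne (m : Multiset Seg) (ε : Seg → ℤ) (Δ : ℕ → LSeg) : ℤ :=
  if (Δ 1).1.2 % 2 = 0 then (-1) ^ (nCentered m + 1) * ε (0, 0)
  else (-1) ^ nCentered m

/-- The signed multisegment `𝔪₁`: if `ε₀ = −1` it is the centered segment
`[−e(Δ₁), e(Δ₁)]` with sign `ε₁`; otherwise it is
`[e(Δ_l), e(Δ₁)] + [−e(Δ₁), −e(Δ_l)]` (non-centered segments carry sign `1`). -/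
def mOne (m : Multiset Seg) (ε : Seg → ℤ) (Δ : ℕ → LSeg) (l : ℕ) : Multiset (Seg × ℤ) :=
  if Special ε (Δ l) then {((-(Δ 1).1.2, (Δ 1).1.2), epsOne m ε Δ)}
  else {(((Δ l).1.2, (Δ 1).1.2), 1), ((-(Δ 1).1.2, -(Δ l).1.2), 1)}

/-- The labeled copies `Δ 1, …, Δ l` whose end gets removed. -/
def DEnd (Δ : ℕ → LSeg) (l : ℕ) : Multiset LSeg := (Finset.Icc 1 l).val.map Δ

/-- The labeled copies (the contragredients of the `Δ j`) whose beginning gets removed. -/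
def DBeg (Δ : ℕ → LSeg) (l : ℕ) : Multiset LSeg := (DEnd Δ l).map LSeg.dual

/-- The labeled copies trimmed on both sides. -/
def DBoth (Δ : ℕ → LSeg) (l : ℕ) : Multiset LSeg := DEnd Δ l ∩ DBeg Δ l

/-- The multisegment `𝔪#`: remove the ends of the `Δ j` and the beginnings of their
contragredients (one labeled copy each, both trims if the copy occurs in both lists),
keep all other copies, and discard empty segments. -/
def mHash (m : Multiset Seg) (Δ : ℕ → LSeg) (l : ℕ) : Multiset Seg :=
  (smap m - DEnd Δ l - (DBeg Δ l - DBoth Δ l)).map Prod.fst +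
    ((DBoth Δ l).map (fun Λ => ((Λ.1.1 + 2, Λ.1.2 - 2) : Seg)) +
        (DEnd Δ l - DBoth Δ l).map (fun Λ => ((Λ.1.1, Λ.1.2 - 2) : Seg)) +
        (DBeg Δ l - DBoth Δ l).map (fun Λ => ((Λ.1.1 + 2, Λ.1.2) : Seg))).filter
      fun Δ0 => Δ0.1 ≤ Δ0.2

/-- The trimmed segment `Λ_{i_j}#` obtained from `Δ j`. -/
def trimAt (Δ : ℕ → LSeg) (l : ℕ) (j : ℕ) : Seg :=
  if Δ j ∈ DBeg Δ l then ((Δ j).1.1 + 2, (Δ j).1.2 - 2)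
  else ((Δ j).1.1, (Δ j).1.2 - 2)

/-- The sign function `ε#` on (centered) segments of `𝔪#`. -/
def epsHash (m : Multiset Seg) (ε : Seg → ℤ) (Δ : ℕ → LSeg) (l : ℕ) : Seg → ℤ :=
  fun Δ0 =>
    if ∃ j ∈ Finset.Icc 1 l, ((Δ j).1.1 + (Δ j).1.2 = 0 ∧ trimAt Δ l j = Δ0) then
      eps0 ε Δ l * ε (Δ0.1 - 2, Δ0.2 + 2)
    else if ∃ j ∈ Finset.Icc 1 l,
        ((Δ j).1.1 + (Δ j).1.2 = 2 ∧ trimAt Δ l j = Δ0 ∧ Δ0 ∉ m) then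
      eps0 ε Δ l
    else if ∃ j ∈ Finset.Icc 1 l,
        ((Δ j).1.1 + (Δ j).1.2 = 2 ∧ trimAt Δ l j = Δ0 ∧ Δ0 ∈ m) then
      -(eps0 ε Δ l) * ε Δ0
    else eps0 ε Δ l * ε Δ0

/-- The good-parity duality algorithm `AD`, as a relation between the input `(m, ε)`
and the output signed multisegment: `AD(0) = 0` and
`AD(𝔪, ε) = (𝔪₁, ε₁) + AD(𝔪#, ε#)`. -/
inductive IsAD : Multiset Seg → (Seg → ℤ) → Multiset (Seg × ℤ) → Prop
  | zero (ε : Seg → ℤ) : IsAD 0 ε 0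
  | step {m : Multiset Seg} {ε : Seg → ℤ} {Δ : ℕ → LSeg} {l : ℕ} {d : Multiset (Seg × ℤ)}
      (hm : m ≠ 0) (hseq : IsInitSeq m ε Δ l)
      (hrec : IsAD (mHash m Δ l) (epsHash m ε Δ l) d) :
      IsAD m ε (mOne m ε Δ l + d)

/-- A valid signed symmetric multisegment in the good-parity setting. -/
structure GoodInput (m : Multiset Seg) (ε : Seg → ℤ) : Prop where
  wf : ∀ Δ0 ∈ m, Seg.WF Δ0
  symm : m.map Seg.dual = m
  parity : ∀ Δ₁ ∈ m, ∀ Δ₂ ∈ m, Δ₁.2 % 2 = Δ₂.2 % 2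
  sign : ∀ Δ0, ε Δ0 = 1 ∨ ε Δ0 = -1

/-! Every segment of `𝔪` is centered and occurs once, so `s(𝔪)` labels all of them `=0`, and
they are totally ordered by their ends. The alternating signs, `ε([-(k+1/2), k+1/2]) = (-1)^(k+1)`,
make each segment the successor of the next larger one, so the initial sequence runs through all
of `𝔪` down to the special segment `[-1/2, 1/2]`. Hence `𝔪₁ = [-y₀, y₀]` with sign
`(-1)^{n₀} = ε([-y₀, y₀])`, and `𝔪#` trims every segment at both ends: it is the same
configuration for `y₀ - 1`, and since `ε₀ = -1` its signs are again alternating. Induct on `y₀`. -/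

theorem Icc_one_val_map_sub (n : ℕ) :
    (Finset.Icc 1 n).val.map (n - ·) = (Finset.range n).val := by
  refine (Multiset.Nodup.ext ?_ (Finset.range n).nodup).2 fun k => ?_
  · refine (Finset.Icc 1 n).nodup.map_on fun x hx y hy hxy => ?_
    simp only [Finset.mem_val, Finset.mem_Icc] at hx hy
    omega
  · simp only [Multiset.mem_map, Finset.mem_val, Finset.mem_Icc, Finset.mem_range]
    exact ⟨by rintro ⟨j, hj, rfl⟩; omega, fun hk => ⟨n - k, by omega, by omega⟩⟩

theorem LSeg.dual_eq0_of_centered {Δ0 : Seg} (h : Δ0.1 + Δ0.2 = 0) :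
    LSeg.dual (Δ0, Label.eq0) = (Δ0, Label.eq0) := by
  simp only [LSeg.dual, Seg.dual, h, if_true, reduceCtorEq, if_false, Prod.mk.injEq, and_true]
  ext <;> dsimp only <;> omega

section General

variable {m : Multiset Seg} {ε : Seg → ℤ} {Δ : ℕ → LSeg} {l : ℕ} {d : Multiset (Seg × ℤ)}

theorem smap_of_nodup_of_centered (hnd : m.Nodup) (hc : ∀ Δ0 ∈ m, Δ0.1 + Δ0.2 = 0) :
    smap m = m.map fun Δ0 => (Δ0, Label.eq0) := by
  have hnc : (m.filter fun Δ0 => ¬ Δ0.1 + Δ0.2 = 0) = 0 :=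
    Multiset.filter_eq_nil.2 fun Δ0 hΔ0 => not_not.2 (hc Δ0 hΔ0)
  have hcf : (m.toFinset.filter fun Δ0 => Δ0.1 + Δ0.2 = 0) = m.toFinset :=
    Finset.filter_true_of_mem fun Δ0 hΔ0 => hc Δ0 (Multiset.mem_toFinset.1 hΔ0)
  have hone : ∀ Δ0 ∈ m.toFinset.val,
      Multiset.replicate (m.count Δ0 / 2) (Δ0, Label.le0) +
        Multiset.replicate (m.count Δ0 / 2) (Δ0, Label.ge0) +
        Multiset.replicate (m.count Δ0 % 2) (Δ0, Label.eq0) = {(Δ0, Label.eq0)} := by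
    intro Δ0 hΔ0
    rw [Multiset.count_eq_one_of_mem hnd (Multiset.mem_toFinset.1 hΔ0)]
    rfl
  rw [smap, hnc, hcf, Multiset.bind_congr hone, Multiset.bind_singleton,
    Multiset.toFinset_val, Multiset.dedup_eq_self.2 hnd, Multiset.map_zero, zero_add]

theorem mHash_of_DBeg_eq_DEnd (h : DBeg Δ l = DEnd Δ l) :
    mHash m Δ l = (smap m - DEnd Δ l).map Prod.fst +
      ((DEnd Δ l).map fun Λ => ((Λ.1.1 + 2, Λ.1.2 - 2) : Seg)).filter
        fun Δ0 => Δ0.1 ≤ Δ0.2 := by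
  have hinter : DEnd Δ l ∩ DEnd Δ l = DEnd Δ l := inf_idem (DEnd Δ l)
  simp [mHash, DBoth, h, hinter]

theorem epsHash_of_centered {j : ℕ} {Δ0 : Seg} (hj : j ∈ Finset.Icc 1 l)
    (hc : (Δ j).1.1 + (Δ j).1.2 = 0) (ht : trimAt Δ l j = Δ0) :
    epsHash m ε Δ l Δ0 = eps0 ε Δ l * ε (Δ0.1 - 2, Δ0.2 + 2) :=
  if_pos ⟨j, hj, hc, ht⟩

theorem IsAD.eq_zero (h : IsAD 0 ε d) : d = 0 := by
  cases h with
  | zero => rfl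
  | step hm => exact absurd rfl hm

theorem IsAD.exists_of_ne_zero (h : IsAD m ε d) (hm : m ≠ 0) :
    ∃ Δ l d', IsInitSeq m ε Δ l ∧ IsAD (mHash m Δ l) (epsHash m ε Δ l) d' ∧
      d = mOne m ε Δ l + d' := by
  cases h with
  | zero => exact absurd rfl hm
  | step _ hseq hrec => exact ⟨_, _, _, hseq, hrec, rfl⟩

end General

/-- The segment `[-(k+1/2), k+1/2]`, so that `centeredSum n = Σ_{k<n} [-(k+1/2), k+1/2]`. -/
def centeredSeg (k : ℕ) : Seg := (-(2 * (k : ℤ) + 1), 2 * (k : ℤ) + 1)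

def centeredSum (n : ℕ) : Multiset Seg := (Multiset.range n).map centeredSeg

theorem centeredSeg_injective : Function.Injective centeredSeg := by
  intro a b h
  simp only [centeredSeg, Prod.mk.injEq] at h
  omega

theorem centeredSeg_centered (k : ℕ) : (centeredSeg k).1 + (centeredSeg k).2 = 0 := by
  simp [centeredSeg]

theorem centeredSeg_succ (k : ℕ) :
    centeredSeg (k + 1) = ((centeredSeg k).1 - 2, (centeredSeg k).2 + 2) := by
  simp only [centeredSeg, Prod.mk.injEq]
  push_cast
  constructor <;> ring

theorem centeredSeg_trim (k : ℕ) :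
    (((centeredSeg (k + 1)).1 + 2, (centeredSeg (k + 1)).2 - 2) : Seg) = centeredSeg k := by
  simp [centeredSeg_succ]

theorem centeredSum_nodup (n : ℕ) : (centeredSum n).Nodup :=
  (Multiset.nodup_range n).map centeredSeg_injective

theorem smap_centeredSum (n : ℕ) :
    smap (centeredSum n) = (Multiset.range n).map fun k => (centeredSeg k, Label.eq0) := by
  rw [smap_of_nodup_of_centered (centeredSum_nodup n), centeredSum, Multiset.map_map]
  · rfl
  · simp only [centeredSum, Multiset.mem_map]
    rintro _ ⟨k, -, rfl⟩
    exact centeredSeg_centered k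

theorem mem_smap_centeredSum {n : ℕ} {Λ : LSeg} :
    Λ ∈ smap (centeredSum n) ↔ ∃ k < n, (centeredSeg k, Label.eq0) = Λ := by
  simp [smap_centeredSum]

theorem nCentered_centeredSum (n : ℕ) : nCentered (centeredSum n) = n := by
  rw [nCentered, Multiset.filter_eq_self.2, centeredSum, Multiset.card_map, Multiset.card_range]
  simp only [centeredSum, Multiset.mem_map]
  rintro _ ⟨k, -, rfl⟩
  exact centeredSeg_centered k

section InitSeq

variable {n : ℕ} {ε : Seg → ℤ} {Δ : ℕ → LSeg} {l : ℕ}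

theorem special_centeredSeg_iff (h : ε (-1, 1) = -1) (k : ℕ) :
    Special ε (centeredSeg k, Label.eq0) ↔ k = 0 := by
  constructor
  · rintro (⟨hk, -⟩ | hk | ⟨hk, -⟩) <;> simp only [centeredSeg, Prod.mk.injEq] at hk <;> omega
  · rintro rfl
    exact Or.inr (Or.inr ⟨by simp [centeredSeg], Or.inr rfl, h⟩)

theorem succ_centeredSeg {k : ℕ} (h : ε (centeredSeg k) = -ε (centeredSeg (k + 1))) :
    Succ ε (centeredSeg (k + 1), Label.eq0) (centeredSeg k, Label.eq0) := by
  refine ⟨⟨Or.inr ⟨rfl, ?_⟩, ?_⟩, ?_, fun _ _ => h⟩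
  · simp [centeredSeg]
  · intro heq
    exact absurd (centeredSeg_injective (congrArg (·.1) heq)) k.succ_ne_self.symm
  · simp only [centeredSeg]
    push_cast
    ring


theorem IsInitSeq.end_centeredSum (h : IsInitSeq (centeredSum n) ε Δ l) :
    ∀ j, 1 ≤ j → j ≤ l → (Δ j).1.2 = 2 * ((n : ℤ) - j) + 1 := by
  intro j hj1 hjl
  induction j, hj1 using Nat.le_induction with
  | base =>
    obtain ⟨k, hk, hΔ1⟩ := mem_smap_centeredSum.1 (h.mem 1 le_rfl hjl)
    have hmax := h.first_max_end _ (mem_smap_centeredSum.2 ⟨n - 1, by omega, rfl⟩)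
    rw [← hΔ1] at hmax ⊢
    simp only [centeredSeg] at hmax ⊢
    omega
  | succ j hj1 ih =>
    rw [(h.succ j hj1 (by omega)).2.1, ih (by omega)]
    push_cast
    ring

theorem IsInitSeq.apply_centeredSum (h : IsInitSeq (centeredSum n) ε Δ l) {j : ℕ}
    (hj1 : 1 ≤ j) (hjl : j ≤ l) : j ≤ n ∧ Δ j = (centeredSeg (n - j), Label.eq0) := by
  obtain ⟨k, hk, hΔj⟩ := mem_smap_centeredSum.1 (h.mem j hj1 hjl)
  have hend := h.end_centeredSum j hj1 hjl
  rw [← hΔj] at hend ⊢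
  simp only [centeredSeg] at hend
  exact ⟨by omega, by congr 2; omega⟩

theorem IsInitSeq.length_centeredSum (hε : ∀ k < n, ε (centeredSeg k) = (-1) ^ (k + 1))
    (h : IsInitSeq (centeredSum n) ε Δ l) : l = n := by
  obtain ⟨hln, hΔl⟩ := h.apply_centeredSum h.one_le le_rfl
  refine le_antisymm hln (not_lt.1 fun hlt => ?_)
  obtain ⟨k, hk⟩ : ∃ k, n - l = k + 1 := ⟨n - l - 1, by omega⟩
  have hl1 := h.one_le
  have h12 : ε (-1, 1) = -1 := hε 0 (by omega)
  rw [hk] at hΔl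
  rcases h.last with hsp | hnsucc
  · rw [hΔl, special_centeredSeg_iff h12] at hsp
    omega
  · refine hnsucc _ (mem_smap_centeredSum.2 ⟨k, by omega, rfl⟩) ?_
    rw [hΔl]
    apply succ_centeredSeg
    rw [hε k (by omega), hε (k + 1) (by omega), pow_succ _ (k + 1)]
    ring

end InitSeq

section Step

variable {n : ℕ} {ε : Seg → ℤ} {Δ : ℕ → LSeg}

theorem DEnd_centeredSum (hΔ : ∀ j ∈ Finset.Icc 1 n, Δ j = (centeredSeg (n - j), Label.eq0)) :
    DEnd Δ n = smap (centeredSum n) := by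
  rw [DEnd, Multiset.map_congr rfl fun j hj => hΔ j hj, smap_centeredSum,
    ← Finset.range_val, ← Icc_one_val_map_sub, Multiset.map_map]
  rfl

theorem DBeg_centeredSum (hΔ : ∀ j ∈ Finset.Icc 1 n, Δ j = (centeredSeg (n - j), Label.eq0)) :
    DBeg Δ n = DEnd Δ n := by
  refine (Multiset.map_congr rfl fun Λ hΛ => ?_).trans (Multiset.map_id _)
  rw [DEnd_centeredSum hΔ, mem_smap_centeredSum] at hΛ
  obtain ⟨k, -, rfl⟩ := hΛ
  exact LSeg.dual_eq0_of_centered (centeredSeg_centered k)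

theorem mHash_centeredSum
    (hΔ : ∀ j ∈ Finset.Icc 1 (n + 1), Δ j = (centeredSeg (n + 1 - j), Label.eq0)) :
    mHash (centeredSum (n + 1)) Δ (n + 1) = centeredSum n := by
  rw [mHash_of_DBeg_eq_DEnd (DBeg_centeredSum hΔ), DEnd_centeredSum hΔ, tsub_self,
    Multiset.map_zero, zero_add, smap_centeredSum]
  -- trimming `[-1/2, 1/2]` at both ends leaves the empty segment, and every other
  -- `[-(k+3/2), k+3/2]` becomes `[-(k+1/2), k+1/2]`
  rw [add_comm n 1, Multiset.range_add,
    show Multiset.range 1 = {0} from rfl, Multiset.map_add, Multiset.map_add, Multiset.filter_add,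
    Multiset.filter_eq_nil.2, zero_add, Multiset.filter_eq_self.2]
  · simp only [Multiset.map_map, Function.comp_def, add_comm 1, centeredSeg_trim, centeredSum]
  · simp only [Multiset.map_map, Multiset.mem_map, Function.comp_apply]
    rintro _ ⟨k, -, rfl⟩
    simp only [centeredSeg]
    omega
  · simp [centeredSeg]

theorem mOne_centeredSum (h12 : ε (-1, 1) = -1)
    (hΔ : ∀ j ∈ Finset.Icc 1 (n + 1), Δ j = (centeredSeg (n + 1 - j), Label.eq0)) :
    mOne (centeredSum (n + 1)) ε Δ (n + 1) = {(centeredSeg n, (-1) ^ (n + 1))} := by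
  have hlast : Special ε (Δ (n + 1)) := by
    rw [hΔ (n + 1) (by simp), Nat.sub_self, special_centeredSeg_iff h12]
  have hfirst : Δ 1 = (centeredSeg n, Label.eq0) := by
    simpa using hΔ 1 (by simp)
  have hodd : ¬ (Δ 1).1.2 % 2 = 0 := by
    simp only [hfirst, centeredSeg]
    omega
  rw [mOne, if_pos hlast, epsOne, if_neg hodd, nCentered_centeredSum, hfirst]
  rfl

theorem epsHash_centeredSum (hε : ∀ k < n + 1, ε (centeredSeg k) = (-1) ^ (k + 1))
    (hΔ : ∀ j ∈ Finset.Icc 1 (n + 1), Δ j = (centeredSeg (n + 1 - j), Label.eq0))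
    {k : ℕ} (hk : k < n) :
    epsHash (centeredSum (n + 1)) ε Δ (n + 1) (centeredSeg k) = (-1) ^ (k + 1) := by
  have hj : n - k ∈ Finset.Icc 1 (n + 1) := Finset.mem_Icc.2 ⟨by omega, by omega⟩
  have hΔj : Δ (n - k) = (centeredSeg (k + 1), Label.eq0) := by
    rw [hΔ _ hj]
    congr 2
    omega
  have hbeg : Δ (n - k) ∈ DBeg Δ (n + 1) := by
    rw [DBeg_centeredSum hΔ]
    exact Multiset.mem_map_of_mem Δ hj
  have htrim : trimAt Δ (n + 1) (n - k) = centeredSeg k := by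
    rw [trimAt, if_pos hbeg, hΔj, centeredSeg_trim]
  have hspecial : Special ε (Δ (n + 1)) := by
    rw [hΔ (n + 1) (by simp), Nat.sub_self, special_centeredSeg_iff (hε 0 (by omega))]
  rw [epsHash_of_centered hj (by rw [hΔj]; exact centeredSeg_centered _) htrim, eps0,
    if_pos hspecial, ← centeredSeg_succ, hε (k + 1) (by omega), pow_succ _ (k + 1)]
  ring

end Step

theorem isAD_centeredSum {n : ℕ} {ε : Seg → ℤ} {d : Multiset (Seg × ℤ)}
    (hε : ∀ k < n, ε (centeredSeg k) = (-1) ^ (k + 1)) (had : IsAD (centeredSum n) ε d) :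
    d = (Multiset.range n).map fun k => (centeredSeg k, (-1) ^ (k + 1)) := by
  induction n generalizing ε d with
  | zero => exact had.eq_zero
  | succ n ih =>
    obtain ⟨Δ, l, d', hseq, hrec, rfl⟩ :=
      had.exists_of_ne_zero (by simp [centeredSum])
    obtain rfl := hseq.length_centeredSum hε
    have hΔ : ∀ j ∈ Finset.Icc 1 (n + 1), Δ j = (centeredSeg (n + 1 - j), Label.eq0) :=
      fun j hj => (hseq.apply_centeredSum (Finset.mem_Icc.1 hj).1 (Finset.mem_Icc.1 hj).2).2
    rw [mHash_centeredSum hΔ] at hrec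
    rw [mOne_centeredSum (hε 0 n.succ_pos) hΔ,
      ih (fun k hk => epsHash_centeredSum hε hΔ hk) hrec, Multiset.range_succ,
      Multiset.map_cons, Multiset.singleton_add]

theorem eps_centeredSeg_of_alternating {K : ℕ} {ε : Seg → ℤ} (h12 : ε (-1, 1) = -1)
    (halt : ∀ k : ℕ, 1 ≤ k → k ≤ K →
      ε (-(2 * (k : ℤ) + 1), 2 * (k : ℤ) + 1) *
        ε (-(2 * (k : ℤ) - 1), 2 * (k : ℤ) - 1) = -1) :
    ∀ k < K + 1, ε (centeredSeg k) = (-1) ^ (k + 1) := by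
  intro k hk
  induction k with
  | zero => simpa [centeredSeg] using h12
  | succ k ih =>
    have hprod := halt (k + 1) (by omega) (by omega)
    rw [← centeredSeg, show (-(2 * ((k + 1 : ℕ) : ℤ) - 1), 2 * ((k + 1 : ℕ) : ℤ) - 1) =
      centeredSeg k by simp only [centeredSeg]; push_cast; ring_nf, ih (by omega)] at hprod
    rcases neg_one_pow_eq_or ℤ (k + 1) with h | h <;>
      rw [h] at hprod <;> rw [pow_succ, h] <;> linarith

theorem stmt16_general (K : ℕ) (ε : Seg → ℤ)
    (h12 : ε (-1, 1) = -1)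
    (halt : ∀ k : ℕ, 1 ≤ k → k ≤ K →
      ε (-(2 * (k : ℤ) + 1), 2 * (k : ℤ) + 1) *
        ε (-(2 * (k : ℤ) - 1), 2 * (k : ℤ) - 1) = -1)
    (d : Multiset (Seg × ℤ))
    (had : IsAD
      ((Finset.range (K + 1)).val.map
        (fun k => ((-(2 * (k : ℤ) + 1), 2 * (k : ℤ) + 1) : Seg)))
      ε d) :
    d = (Finset.range (K + 1)).val.map (fun k =>
      (((-(2 * (k : ℤ) + 1), 2 * (k : ℤ) + 1) : Seg),
        ε (-(2 * (k : ℤ) + 1), 2 * (k : ℤ) + 1))) := by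
  have hε := eps_centeredSeg_of_alternating h12 halt
  -- the cast `(k : ℤ)` above is elaborated as a monadic lift of `Finset.range (K + 1)` to `ℤ`
  simp only [Multiset.pure_def, Multiset.bind_def, Multiset.bind_singleton, Multiset.map_map,
    Finset.range_val] at had ⊢
  rw [isAD_centeredSum hε had]
  refine Multiset.map_congr rfl fun k hk => ?_
  rw [← hε k (Multiset.mem_range.1 hk)]
  rfl

/-- Lemma 10.1.2: in the half-integer case, with
`𝔪 = Σ_{y=1/2}^{y₀} [−y,y]` (here `y₀ = K + 1/2`), `ε([−1/2,1/2]) = −1` and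
alternating signs, one has `AD(𝔪, ε) = (𝔪, ε)`. -/
theorem stmt16 (K : ℕ) (ε : Seg → ℤ)
    (hsign : ∀ Δ0 : Seg, ε Δ0 = 1 ∨ ε Δ0 = -1)
    (h12 : ε (-1, 1) = -1)
    (halt : ∀ k : ℕ, 1 ≤ k → k ≤ K →
      ε (-(2 * (k : ℤ) + 1), 2 * (k : ℤ) + 1) *
        ε (-(2 * (k : ℤ) - 1), 2 * (k : ℤ) - 1) = -1)
    (d : Multiset (Seg × ℤ))
    (had : IsAD
      ((Finset.range (K + 1)).val.map
        (fun k => ((-(2 * (k : ℤ) + 1), 2 * (k : ℤ) + 1) : Seg)))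
      ε d) :
    d = (Finset.range (K + 1)).val.map (fun k =>
      (((-(2 * (k : ℤ) + 1), 2 * (k : ℤ) + 1) : Seg),
        ε (-(2 * (k : ℤ) + 1), 2 * (k : ℤ) + 1))) :=
  stmt16_general K ε h12 halt d had

end AZ
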